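/- Let ϑ₁ be the random Fibonacci substitution a ↦ {ab, ba}, b ↦ {a}, and let f be the Fibonacci sequence with f_0 = f_1 = 1. For every p ≥ 1 and every natural number n whose Zeckendorf representation n = Σ_{i=1}^{p} ε_i f_i has leading digit ε_p = 1, and for every word u ∈ (ϑ₁ᵖ(b))^{ε_p}⋯(ϑ₁(b))^{ε_1}, either uab or uba appears as a prefix of some word in ϑ₁^{p+1}(a). -/

import Mathlib

/-- Two-letter alphabet. -/
inductive AB : Type
  | a : AB
  | b : AB
deriving DecidableEq

/-- Extension of a random substitution to words, by setwise concatenation. -/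
def substW (θ : AB → Set (List AB)) : List AB → Set (List AB)
  | [] => {[]}
  | x :: w => {u | ∃ v ∈ θ x, ∃ t ∈ substW θ w, u = v ++ t}

/-- Extension of a random substitution to sets of words. -/
def substS (θ : AB → Set (List AB)) (A : Set (List AB)) : Set (List AB) :=
  ⋃ w ∈ A, substW θ w

/-- Level-`n` inflation words of the letter `x`. -/
def substIter (θ : AB → Set (List AB)) (n : ℕ) (x : AB) : Set (List AB) :=
  (substS θ)^[n] {[x]}

/-- A word is legal if it is a subword of some level-`k` inflation word. -/
def legalW (θ : AB → Set (List AB)) (u : List AB) : Prop :=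
  ∃ (k : ℕ) (x : AB), ∃ w ∈ substIter θ k x, u <:+: w

/-- The random Fibonacci substitution a ↦ {ab, ba}, b ↦ {a}. -/
def randFib : AB → Set (List AB)
  | AB.a => {[AB.a, AB.b], [AB.b, AB.a]}
  | AB.b => {[AB.a]}

/-- `j`-fold setwise concatenation of a set of words with itself. -/
def setNPow (A : Set (List AB)) : ℕ → Set (List AB)
  | 0 => {[]}
  | j + 1 => {w | ∃ u ∈ setNPow A j, ∃ v ∈ A, w = u ++ v}

/-- The set `(ϑ₁ᵖ(b))^{ε_p} ⋯ (ϑ₁(b))^{ε_1}` of concatenations determined by a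
digit string `ε`. -/
def zeckChain (ε : ℕ → ℕ) : ℕ → Set (List AB)
  | 0 => {[]}
  | k + 1 => {w | ∃ u ∈ setNPow (substIter randFib (k + 1) AB.b) (ε (k + 1)),
      ∃ v ∈ zeckChain ε k, w = u ++ v}

/-! Since `ϑ₁(b) = {a}` and `ϑ₁(a) = {ab, ba}`, the sets `ϑ₁ᵏ⁺¹(b) = ϑ₁ᵏ(a)` and
`ϑ₁ᵏ⁺¹(a) = ϑ₁ᵏ(a) ϑ₁ᵏ(b) ∪ ϑ₁ᵏ(b) ϑ₁ᵏ(a)` satisfy Fibonacci-type recursions.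
By induction on `p`, every `u ∈ (ϑ₁ᵖ(b))^{ε_p} ⋯ (ϑ₁(b))^{ε_1}` followed by a prefix `t` of
a word of `ϑ₁(a)` is a prefix of a word of `ϑ₁ᵖ⁺¹(a)`: a new leading factor
`v ∈ ϑ₁ᵖ⁺¹(b)` is prepended through `ϑ₁ᵖ⁺²(a) ⊇ ϑ₁ᵖ⁺¹(b) ϑ₁ᵖ⁺¹(a)`, and a digit `0` is absorbed
through `ϑ₁ᵖ⁺²(a) ⊇ ϑ₁ᵖ⁺¹(a) ϑ₁ᵖ⁺¹(b)`. Taking `t = ab` gives the claim. -/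

open Set

section Prefixes

variable {α : Type*}

def prefixesOf (A : Set (List α)) : Set (List α) := {t | ∃ w ∈ A, t <+: w}

theorem prefixesOf_mono {A B : Set (List α)} (h : A ⊆ B) : prefixesOf A ⊆ prefixesOf B :=
  fun _ ⟨w, hw, ht⟩ => ⟨w, h hw, ht⟩

theorem mem_prefixesOf_image2_append {A B : Set (List α)} {t : List α}
    (ht : t ∈ prefixesOf A) (hB : B.Nonempty) : t ∈ prefixesOf (image2 (· ++ ·) A B) := by
  obtain ⟨w, hw, htw⟩ := ht
  obtain ⟨s, hs⟩ := hB
  exact ⟨w ++ s, mem_image2_of_mem hw hs, htw.trans (List.prefix_append w s)⟩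

theorem append_mem_prefixesOf_image2_append {A B : Set (List α)} {v t : List α}
    (hv : v ∈ A) (ht : t ∈ prefixesOf B) : v ++ t ∈ prefixesOf (image2 (· ++ ·) A B) := by
  obtain ⟨w, hw, htw⟩ := ht
  exact ⟨v ++ w, mem_image2_of_mem hv hw, (List.prefix_append_right_inj v).2 htw⟩

end Prefixes

section Substitution

variable {θ : AB → Set (List AB)}

theorem substW_append (w₁ w₂ : List AB) :
    substW θ (w₁ ++ w₂) = image2 (· ++ ·) (substW θ w₁) (substW θ w₂) := by
  induction w₁ with
  | nil => ext u; simp [substW]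
  | cons x w ih =>
    ext u
    simp only [List.cons_append, substW, ih, mem_image2, mem_ofPred_eq]
    constructor
    · rintro ⟨v, hv, _, ⟨t₁, ht₁, t₂, ht₂, rfl⟩, rfl⟩
      exact ⟨v ++ t₁, ⟨v, hv, t₁, ht₁, rfl⟩, t₂, ht₂, List.append_assoc ..⟩
    · rintro ⟨_, ⟨v, hv, t₁, ht₁, rfl⟩, t₂, ht₂, rfl⟩
      exact ⟨v, hv, t₁ ++ t₂, ⟨t₁, ht₁, t₂, ht₂, rfl⟩, List.append_assoc ..⟩

theorem mem_substS {A : Set (List AB)} {u : List AB} :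
    u ∈ substS θ A ↔ ∃ w ∈ A, u ∈ substW θ w := by
  simp [substS]

theorem substS_singleton_letter (x : AB) : substS θ {[x]} = θ x := by
  ext u
  simp [substS, substW]

theorem substS_union (A B : Set (List AB)) : substS θ (A ∪ B) = substS θ A ∪ substS θ B :=
  biUnion_union A B _

theorem substS_image2_append (A B : Set (List AB)) :
    substS θ (image2 (· ++ ·) A B) = image2 (· ++ ·) (substS θ A) (substS θ B) := by
  ext u
  simp only [mem_substS, mem_image2]
  constructor
  · rintro ⟨_, ⟨v, hv, w, hw, rfl⟩, hu⟩
    rw [substW_append] at hu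
    obtain ⟨s, hs, t, ht, rfl⟩ := hu
    exact ⟨s, ⟨v, hv, hs⟩, t, ⟨w, hw, ht⟩, rfl⟩
  · rintro ⟨s, ⟨v, hv, hs⟩, t, ⟨w, hw, ht⟩, rfl⟩
    exact ⟨v ++ w, ⟨v, hv, w, hw, rfl⟩, substW_append v w ▸ mem_image2_of_mem hs ht⟩

theorem iterate_substS_union (k : ℕ) (A B : Set (List AB)) :
    (substS θ)^[k] (A ∪ B) = (substS θ)^[k] A ∪ (substS θ)^[k] B := by
  induction k generalizing A B with
  | zero => rfl
  | succ k ih => simp only [Function.iterate_succ_apply, substS_union, ih]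

theorem iterate_substS_image2_append (k : ℕ) (A B : Set (List AB)) :
    (substS θ)^[k] (image2 (· ++ ·) A B) =
      image2 (· ++ ·) ((substS θ)^[k] A) ((substS θ)^[k] B) := by
  induction k generalizing A B with
  | zero => rfl
  | succ k ih => simp only [Function.iterate_succ_apply, substS_image2_append, ih]

theorem substIter_succ (k : ℕ) (x : AB) : substIter θ (k + 1) x = (substS θ)^[k] (θ x) := by
  rw [substIter, Function.iterate_succ_apply, substS_singleton_letter]

theorem substW_nonempty (hθ : ∀ x, (θ x).Nonempty) (w : List AB) : (substW θ w).Nonempty := by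
  induction w with
  | nil => exact singleton_nonempty _
  | cons x w ih =>
    obtain ⟨v, hv⟩ := hθ x
    obtain ⟨t, ht⟩ := ih
    exact ⟨v ++ t, v, hv, t, ht, rfl⟩

theorem substIter_nonempty (hθ : ∀ x, (θ x).Nonempty) (k : ℕ) (x : AB) :
    (substIter θ k x).Nonempty := by
  induction k with
  | zero => exact singleton_nonempty _
  | succ k ih =>
    obtain ⟨w, hw⟩ := ih
    obtain ⟨u, hu⟩ := substW_nonempty hθ w
    rw [substIter, Function.iterate_succ_apply']
    exact ⟨u, mem_substS.2 ⟨w, hw, hu⟩⟩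

end Substitution

section RandomFibonacci

theorem randFib_nonempty (x : AB) : (randFib x).Nonempty := by
  cases x <;> simp [randFib]

theorem substIter_randFib_succ_b (k : ℕ) :
    substIter randFib (k + 1) AB.b = substIter randFib k AB.a :=
  substIter_succ k AB.b

theorem substIter_randFib_succ_a (k : ℕ) :
    substIter randFib (k + 1) AB.a =
      image2 (· ++ ·) (substIter randFib k AB.a) (substIter randFib k AB.b) ∪
        image2 (· ++ ·) (substIter randFib k AB.b) (substIter randFib k AB.a) := by
  have hsplit : randFib AB.a = image2 (· ++ ·) {[AB.a]} {[AB.b]} ∪ image2 (· ++ ·) {[AB.b]} {[AB.a]} := by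
    simp only [image2_singleton, List.singleton_append, randFib, insert_eq]
  rw [substIter_succ, hsplit, iterate_substS_union, iterate_substS_image2_append,
    iterate_substS_image2_append]
  rfl

theorem setNPow_one (A : Set (List AB)) : setNPow A 1 = A := by
  ext w
  simp [setNPow]

theorem zeckChain_append_mem_prefixesOf {ε : ℕ → ℕ} (hε : ∀ i, ε i ≤ 1) (p : ℕ) :
    ∀ u ∈ zeckChain ε p, ∀ t ∈ prefixesOf (substIter randFib 1 AB.a),
      u ++ t ∈ prefixesOf (substIter randFib (p + 1) AB.a) := by
  induction p with
  | zero =>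
    rintro u rfl t ht
    exact ht
  | succ p ih =>
    rintro _ ⟨v, hv, u, hu, rfl⟩ t ht
    rw [List.append_assoc, substIter_randFib_succ_a (p + 1)]
    rcases Nat.le_one_iff_eq_zero_or_eq_one.mp (hε (p + 1)) with h | h <;>
      rw [h] at hv
    · rw [show v = [] from hv, List.nil_append]
      exact prefixesOf_mono subset_union_left <|
        mem_prefixesOf_image2_append (ih u hu t ht) (substIter_nonempty randFib_nonempty _ _)
    · rw [setNPow_one] at hv
      exact prefixesOf_mono subset_union_right <|
        append_mem_prefixesOf_image2_append hv (ih u hu t ht)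

end RandomFibonacci

theorem randFib_prefix_general (p : ℕ) (ε : ℕ → ℕ)
    (hε1 : ∀ i, ε i ≤ 1) :
    ∀ u ∈ zeckChain ε p, ∃ w ∈ substIter randFib (p + 1) AB.a,
      (u ++ [AB.a, AB.b]) <+: w ∨ (u ++ [AB.b, AB.a]) <+: w := by
  intro u hu
  have hab : [AB.a, AB.b] ∈ prefixesOf (substIter randFib 1 AB.a) :=
    ⟨[AB.a, AB.b], by simp [substIter_succ, randFib], List.prefix_refl _⟩
  obtain ⟨w, hw, hprefix⟩ := zeckChain_append_mem_prefixesOf hε1 p u hu _ hab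
  exact ⟨w, hw, Or.inl hprefix⟩

/-- For `p ≥ 1` and a Zeckendorf digit string `ε_p ⋯ ε_1` with `ε_p = 1`, every
word `u ∈ (ϑ₁ᵖ(b))^{ε_p} ⋯ (ϑ₁(b))^{ε_1}` is such that `uab` or `uba` is a
prefix of some word in `ϑ₁^{p+1}(a)`. -/
theorem randFib_prefix (p : ℕ) (hp : 1 ≤ p) (ε : ℕ → ℕ)
    (hε1 : ∀ i, ε i ≤ 1) (hεcons : ∀ i, ε i * ε (i + 1) = 0)
    (hεsupp : ∀ i, i ∉ Finset.Icc 1 p → ε i = 0) (hεtop : ε p = 1) :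
    ∀ u ∈ zeckChain ε p, ∃ w ∈ substIter randFib (p + 1) AB.a,
      (u ++ [AB.a, AB.b]) <+: w ∨ (u ++ [AB.b, AB.a]) <+: w :=
  randFib_prefix_general p ε hε1
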